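/- arXiv:1806.08048 — 2 statements merged into one kernel-verified Lean document; each statement's English description precedes it below -/
import Mathlib

section
/- Let n ≥ 1, let Ω ⊂ ℝⁿ be a nonempty bounded open set, let s ∈ (0,1), ε ∈ (0, s/2) and K ≥ 0. Suppose g : Ω → ℝⁿ is measurable and satisfies (i) ‖g(x)‖ ≤ K δ(x)^{s−1} for all x ∈ Ω, and (ii) ‖g(x) − g(y)‖ ≤ K ‖x − y‖^s / δ(x,y) for all x, y ∈ Ω, and suppose A := ∫_Ω δ(x)^{2ε−1} dx < ∞. Then there exists a constant C depending only on n such that ∬_{Ω×Ω} ‖g(x) − g(y)‖² δ(x,y)^{1−2ε} ‖x − y‖^{−(n+2s−4ε)} dx dy ≤ C · K² · A · (1/ε + 1/(s − 2ε)). -/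
open MeasureTheory Metric Set Function
open scoped ENNReal

/-!
By symmetry of the integrand it suffices to integrate over the pairs with `δ x ≤ δ y`, where
`δ(x, y) = δ x`. Fix such an `x`. On the ball `‖y - x‖ ≤ δ x` the Hölder bound gives the
integrand `≤ K² δ(x)^(-1-2ε) ‖y - x‖^(4ε-n)`; outside it `‖g x - g y‖ ≤ 2K δ(x)^(s-1)` gives
`≤ 4K² δ(x)^(2s-1-2ε) ‖y - x‖^(-n-2(s-2ε))`. In polar coordinates both pieces integrate to
`n |B₁| K² δ(x)^(2ε-1) (1/(4ε) + 2/(s-2ε))`, and integrating this in `x` gives the claim with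
`C = 4 n |B₁|`.
-/

theorem lintegral_Ioc_ofReal_rpow_sub_one {q R : ℝ} (hq : 0 < q) (hR : 0 ≤ R) :
    ∫⁻ r in Ioc 0 R, ENNReal.ofReal (r ^ (q - 1)) = ENNReal.ofReal (R ^ q / q) := by
  rw [← ofReal_integral_eq_lintegral_ofReal
      (intervalIntegral.intervalIntegrable_rpow' (by linarith)).1
      (ae_restrict_of_forall_mem measurableSet_Ioc fun r hr ↦ Real.rpow_nonneg hr.1.le _),
    ← intervalIntegral.integral_of_le hR, integral_rpow (Or.inl (by linarith))]
  simp [Real.zero_rpow hq.ne']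

theorem lintegral_Ioi_ofReal_rpow_neg_sub_one {p R : ℝ} (hp : 0 < p) (hR : 0 < R) :
    ∫⁻ r in Ioi R, ENNReal.ofReal (r ^ (-p - 1)) = ENNReal.ofReal (R ^ (-p) / p) := by
  rw [← ofReal_integral_eq_lintegral_ofReal (integrableOn_Ioi_rpow_of_lt (by linarith) hR)
      (ae_restrict_of_forall_mem measurableSet_Ioi fun r hr ↦ Real.rpow_nonneg (hR.trans hr).le _),
    integral_Ioi_rpow_of_lt (by linarith) hR]
  congr 1
  rw [show -p - 1 + 1 = -p by ring, neg_div_neg_eq]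

theorem pow_pred_mul_rpow_sub_natCast {r : ℝ} (hr : 0 < r) {d : ℕ} (hd : 1 ≤ d) (e : ℝ) :
    r ^ (d - 1) * r ^ (e - d) = r ^ (e - 1) := by
  rw [← Real.rpow_natCast, ← Real.rpow_add hr, Nat.cast_sub hd]
  ring_nf

theorem sq_mul_rpow_mul_rpow_le_of_le_mul_rpow_div {G K m t d s ε : ℝ} (hm : 0 < m) (ht : 0 ≤ t)
    (hd : 0 ≤ d) (hεs : 2 * ε < s) (hG : G ≤ K * t ^ s / m) (hG₀ : 0 ≤ G) :
    G ^ 2 * m ^ (1 - 2 * ε) * t ^ (-(d + 2 * s - 4 * ε)) ≤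
      K ^ 2 * m ^ (-1 - 2 * ε) * t ^ (4 * ε - d) := by
  rcases ht.eq_or_lt with rfl | ht
  · rw [Real.zero_rpow (by linarith), mul_zero]
    positivity
  have hm' : m ^ (-1 - 2 * ε) = m ^ (1 - 2 * ε) / m ^ 2 := by
    rw [← Real.rpow_natCast, ← Real.rpow_sub hm]
    ring_nf
  have ht' : t ^ (4 * ε - d) = (t ^ s) ^ 2 * t ^ (-(d + 2 * s - 4 * ε)) := by
    rw [← Real.rpow_natCast, ← Real.rpow_mul ht.le, ← Real.rpow_add ht]
    ring_nf
  calc G ^ 2 * m ^ (1 - 2 * ε) * t ^ (-(d + 2 * s - 4 * ε))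
      ≤ (K * t ^ s / m) ^ 2 * m ^ (1 - 2 * ε) * t ^ (-(d + 2 * s - 4 * ε)) := by gcongr
    _ = K ^ 2 * m ^ (-1 - 2 * ε) * t ^ (4 * ε - d) := by
      rw [hm', ht']
      ring

theorem sq_mul_rpow_le_of_le_mul_rpow {G K m s ε : ℝ} (hm : 0 < m) (hG : G ≤ 2 * K * m ^ (s - 1))
    (hG₀ : 0 ≤ G) : G ^ 2 * m ^ (1 - 2 * ε) ≤ 4 * K ^ 2 * m ^ (2 * s - 1 - 2 * ε) := by
  have hm' : m ^ (2 * s - 1 - 2 * ε) = (m ^ (s - 1)) ^ 2 * m ^ (1 - 2 * ε) := by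
    rw [← Real.rpow_natCast, ← Real.rpow_mul hm.le, ← Real.rpow_add hm]
    ring_nf
  calc G ^ 2 * m ^ (1 - 2 * ε) ≤ (2 * K * m ^ (s - 1)) ^ 2 * m ^ (1 - 2 * ε) := by gcongr
    _ = 4 * K ^ 2 * m ^ (2 * s - 1 - 2 * ε) := by
      rw [hm']
      ring

theorem nearFarMass_le {c K δ s ε : ℝ} (hc : 0 ≤ c) (hδ : 0 < δ) (hε : 0 < ε) :
    c * (K ^ 2 * δ ^ (-1 - 2 * ε) * (δ ^ (4 * ε) / (4 * ε)) +
        4 * K ^ 2 * δ ^ (2 * s - 1 - 2 * ε) * (δ ^ (-(2 * (s - 2 * ε))) / (2 * (s - 2 * ε)))) ≤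
      2 * c * K ^ 2 * (1 / ε + 1 / (s - 2 * ε)) * δ ^ (2 * ε - 1) := by
  have hexp : ∀ a b : ℝ, a + b = 2 * ε - 1 → δ ^ a * δ ^ b = δ ^ (2 * ε - 1) :=
    fun a b hab ↦ by rw [← Real.rpow_add hδ, hab]
  have hnear := hexp (-1 - 2 * ε) (4 * ε) (by ring)
  have hfar := hexp (2 * s - 1 - 2 * ε) (-(2 * (s - 2 * ε))) (by ring)
  have hsum : 1 / (4 * ε) + 2 / (s - 2 * ε) ≤ 2 * (1 / ε + 1 / (s - 2 * ε)) := by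
    have : 1 / (4 * ε) ≤ 2 / ε := by
      rw [div_le_div_iff₀ (by positivity) hε]
      linarith
    linarith [show 2 * (1 / ε + 1 / (s - 2 * ε)) = 2 / ε + 2 / (s - 2 * ε) by ring]
  calc _ = c * K ^ 2 * δ ^ (2 * ε - 1) * (1 / (4 * ε) + 2 / (s - 2 * ε)) := by
        -- `ring` cancels the `2` of `2 * (s - 2 * ε)` only once `s - 2 * ε` is an atom
        generalize s - 2 * ε = t at hfar ⊢
        linear_combination (c * K ^ 2 / (4 * ε)) * hnear + (c * (4 * K ^ 2) / (2 * t)) * hfar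
    _ ≤ c * K ^ 2 * δ ^ (2 * ε - 1) * (2 * (1 / ε + 1 / (s - 2 * ε))) := by gcongr
    _ = _ := by ring

theorem Bornology.IsBounded.nonempty_frontier {E : Type*} [NormedAddCommGroup E]
    [NormedSpace ℝ E] [Nontrivial E] {Ω : Set E} (hb : IsBounded Ω) (hne : Ω.Nonempty) :
    (frontier Ω).Nonempty :=
  nonempty_frontier_iff.2 ⟨hne, fun h ↦ NormedSpace.unbounded_univ ℝ E (h ▸ hb)⟩

theorem IsOpen.infDist_frontier_pos {X : Type*} [PseudoMetricSpace X] {Ω : Set X} (hΩ : IsOpen Ω)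
    (hfr : (frontier Ω).Nonempty) {x : X} (hx : x ∈ Ω) : 0 < infDist x (frontier Ω) :=
  (isClosed_frontier.notMem_iff_infDist_pos hfr).1 fun h ↦ (hΩ.frontier_eq ▸ h).2 hx

namespace MeasureTheory

theorem lintegral_lintegral_le_two_mul_of_symm {α : Type*} [MeasurableSpace α]
    {μ : Measure α} [SFinite μ] {F : α → α → ℝ≥0∞} (hF : Measurable (uncurry F))
    (hsymm : ∀ x y, F x y = F y x) {φ : α → ℝ} (hφ : Measurable φ) :
    ∫⁻ x, ∫⁻ y, F x y ∂μ ∂μ ≤ 2 * ∫⁻ x, ∫⁻ y, (if φ x ≤ φ y then F x y else 0) ∂μ ∂μ := by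
  set G : α → α → ℝ≥0∞ := fun x y ↦ if φ x ≤ φ y then F x y else 0
  have hG : Measurable (uncurry G) :=
    Measurable.ite (measurableSet_le (hφ.comp measurable_fst) (hφ.comp measurable_snd)) hF
      measurable_const
  have hGx : Measurable fun x ↦ ∫⁻ y, G x y ∂μ := hG.lintegral_prod_right'
  have hFG : ∀ x y, F x y ≤ G x y + G y x := fun x y ↦ by
    rcases le_total (φ x) (φ y) with h | h
    · simp [G, h]
    · simp [G, h, hsymm x y]
  calc ∫⁻ x, ∫⁻ y, F x y ∂μ ∂μ ≤ ∫⁻ x, ∫⁻ y, G x y + G y x ∂μ ∂μ :=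
        lintegral_mono fun x ↦ lintegral_mono fun y ↦ hFG x y
    _ = ∫⁻ x, ∫⁻ y, G x y ∂μ ∂μ + ∫⁻ x, ∫⁻ y, G y x ∂μ ∂μ := by
        rw [← lintegral_add_left hGx]
        exact lintegral_congr fun x ↦ lintegral_add_left (hG.comp measurable_prodMk_left) _
    _ = 2 * ∫⁻ x, ∫⁻ y, G x y ∂μ ∂μ := by
        rw [lintegral_lintegral_swap (f := fun x y ↦ G y x)
          (hG.comp measurable_swap).aemeasurable, two_mul]

local notation "dim" => Module.finrank ℝ

section WeightedEstimate

variable {E : Type*} [NormedAddCommGroup E] [NormedSpace ℝ E]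

noncomputable def nearFarKernel (x : E) (R a q b p : ℝ) (y : E) : ℝ≥0∞ :=
  if ‖y - x‖ ≤ R then ENNReal.ofReal (a * ‖y - x‖ ^ (q - dim E))
  else ENNReal.ofReal (b * ‖y - x‖ ^ (-(dim E + p)))

variable {F : Type*} [NormedAddCommGroup F] {g : E → F} {δ : E → ℝ} {s ε K : ℝ}

theorem ofReal_le_nearFarKernel {x y : E} (hx : 0 < δ x) (hxy : δ x ≤ δ y) (hs : s ≤ 1)
    (hεs : 2 * ε < s) (hK : 0 ≤ K) (hgx : ‖g x‖ ≤ K * δ x ^ (s - 1))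
    (hgy : ‖g y‖ ≤ K * δ y ^ (s - 1))
    (hH : ‖g x - g y‖ ≤ K * ‖x - y‖ ^ s / min (δ x) (δ y)) :
    ENNReal.ofReal (‖g x - g y‖ ^ 2 * min (δ x) (δ y) ^ (1 - 2 * ε) *
        ‖x - y‖ ^ (-((dim E : ℝ) + 2 * s - 4 * ε))) ≤
      nearFarKernel x (δ x) (K ^ 2 * δ x ^ (-1 - 2 * ε)) (4 * ε)
        (4 * K ^ 2 * δ x ^ (2 * s - 1 - 2 * ε)) (2 * (s - 2 * ε)) y := by
  rw [min_eq_left hxy] at hH ⊢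
  rw [norm_sub_rev x y] at hH ⊢
  unfold nearFarKernel
  split_ifs
  · exact ENNReal.ofReal_le_ofReal <| sq_mul_rpow_mul_rpow_le_of_le_mul_rpow_div hx
      (norm_nonneg _) (Nat.cast_nonneg _) hεs hH (norm_nonneg _)
  · have hgy' : K * δ y ^ (s - 1) ≤ K * δ x ^ (s - 1) :=
      mul_le_mul_of_nonneg_left (Real.rpow_le_rpow_of_nonpos hx hxy (by linarith)) hK
    have hdiff : ‖g x - g y‖ ≤ 2 * K * δ x ^ (s - 1) := by
      linarith [norm_sub_le (g x) (g y)]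
    rw [show -((dim E : ℝ) + 2 * s - 4 * ε) = -(dim E + 2 * (s - 2 * ε)) by ring]
    exact ENNReal.ofReal_le_ofReal <| mul_le_mul_of_nonneg_right
      (sq_mul_rpow_le_of_le_mul_rpow hx hdiff (norm_nonneg _)) (by positivity)

variable [FiniteDimensional ℝ E] [MeasurableSpace E] [BorelSpace E] [Nontrivial E]
  (μ : Measure E) [μ.IsAddHaarMeasure]

theorem lintegral_fun_norm_addHaar {f : ℝ → ℝ≥0∞} (hf : Measurable f) :
    ∫⁻ x, f ‖x‖ ∂μ =
      dim E * μ (ball 0 1) * ∫⁻ r in Ioi (0 : ℝ), ENNReal.ofReal (r ^ (dim E - 1)) * f r := by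
  have hf' : Measurable fun r : Ioi (0 : ℝ) ↦ f r := hf.comp measurable_subtype_coe
  calc ∫⁻ x, f ‖x‖ ∂μ = ∫⁻ x : ({(0)}ᶜ : Set E), f ‖x.1‖ ∂(μ.comap (↑)) := by
        rw [lintegral_subtype_comap (measurableSet_singleton _).compl fun x ↦ f ‖x‖,
          restrict_compl_singleton]
    _ = ∫⁻ p, f p.2 ∂μ.toSphere.prod (.volumeIoiPow (dim E - 1)) := by
        simpa using μ.measurePreserving_homeomorphUnitSphereProd.lintegral_comp_emb
          (Homeomorph.measurableEmbedding _) (f ∘ Subtype.val ∘ Prod.snd)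
    _ = μ.toSphere univ * ∫⁻ r, f r ∂.volumeIoiPow (dim E - 1) := by
        simpa using lintegral_prod_mul (μ := μ.toSphere) (f := fun _ ↦ (1 : ℝ≥0∞))
          aemeasurable_const hf'.aemeasurable
    _ = _ := by
        rw [Measure.volumeIoiPow, lintegral_withDensity_eq_lintegral_mul _
            (measurable_subtype_coe.pow_const _).ennreal_ofReal hf',
          μ.toSphere_apply_univ, ← lintegral_subtype_comap measurableSet_Ioi]
        rfl

theorem lintegral_fun_norm_sub_addHaar {f : ℝ → ℝ≥0∞} (hf : Measurable f) (x : E) :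
    ∫⁻ y, f ‖y - x‖ ∂μ =
      dim E * μ (ball 0 1) * ∫⁻ r in Ioi (0 : ℝ), ENNReal.ofReal (r ^ (dim E - 1)) * f r := by
  rw [lintegral_sub_right_eq_self (fun y ↦ f ‖y‖) x, lintegral_fun_norm_addHaar μ hf]

theorem lintegral_nearFarKernel (x : E) {R a q b p : ℝ} (hR : 0 < R) (ha : 0 ≤ a) (hq : 0 < q)
    (hb : 0 ≤ b) (hp : 0 < p) :
    ∫⁻ y, nearFarKernel x R a q b p y ∂μ =
      ENNReal.ofReal (dim E * μ.real (ball 0 1) * (a * (R ^ q / q) + b * (R ^ (-p) / p))) := by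
  have hd : 1 ≤ dim E := Module.finrank_pos
  set f : ℝ → ℝ≥0∞ := fun r ↦ if r ≤ R then ENNReal.ofReal (a * r ^ (q - dim E))
    else ENNReal.ofReal (b * r ^ (-(dim E + p)))
  have hf : Measurable f := Measurable.ite measurableSet_Iic (by fun_prop) (by fun_prop)
  have hradial : ∀ {c e r : ℝ}, 0 ≤ c → 0 < r → ENNReal.ofReal (r ^ (dim E - 1)) *
      ENNReal.ofReal (c * r ^ (e - dim E)) = ENNReal.ofReal c * ENNReal.ofReal (r ^ (e - 1)) := by
    intro c e r hc hr
    rw [← ENNReal.ofReal_mul (by positivity), ← ENNReal.ofReal_mul hc,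
      ← pow_pred_mul_rpow_sub_natCast hr hd]
    ring_nf
  have hnear : ∫⁻ r in Ioc 0 R, ENNReal.ofReal (r ^ (dim E - 1)) * f r =
      ENNReal.ofReal (a * (R ^ q / q)) := by
    rw [setLIntegral_congr_fun measurableSet_Ioc (g := fun r ↦ ENNReal.ofReal a *
        ENNReal.ofReal (r ^ (q - 1))) fun r hr ↦ by simp only [f, if_pos hr.2, hradial ha hr.1],
      lintegral_const_mul' _ _ ENNReal.ofReal_ne_top, lintegral_Ioc_ofReal_rpow_sub_one hq hR.le,
      ← ENNReal.ofReal_mul ha]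
  have hfar : ∫⁻ r in Ioi R, ENNReal.ofReal (r ^ (dim E - 1)) * f r =
      ENNReal.ofReal (b * (R ^ (-p) / p)) := by
    rw [setLIntegral_congr_fun measurableSet_Ioi (g := fun r ↦ ENNReal.ofReal b *
        ENNReal.ofReal (r ^ (-p - 1))) fun r (hr : R < r) ↦ by
          rw [show f r = _ from if_neg hr.not_ge, show -((dim E : ℝ) + p) = -p - dim E by ring,
            hradial hb (hR.trans hr)],
      lintegral_const_mul' _ _ ENNReal.ofReal_ne_top, lintegral_Ioi_ofReal_rpow_neg_sub_one hp hR,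
      ← ENNReal.ofReal_mul hb]
  rw [show nearFarKernel x R a q b p = fun y ↦ f ‖y - x‖ from rfl,
    lintegral_fun_norm_sub_addHaar μ hf, ← Ioc_union_Ioi_eq_Ioi hR.le,
    lintegral_union measurableSet_Ioi Ioc_disjoint_Ioi_same, hnear, hfar,
    ← ENNReal.ofReal_add (by positivity) (by positivity),
    ← ofReal_measureReal measure_ball_lt_top.ne, ← ENNReal.ofReal_natCast,
    ← ENNReal.ofReal_mul (by positivity), ← ENNReal.ofReal_mul (by positivity)]

variable {μ}

theorem setLIntegral_weightedDiff_le {Ω : Set E} (hΩ : MeasurableSet Ω) {x : E} (hxΩ : x ∈ Ω)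
    (hx : 0 < δ x) (hs : s ≤ 1) (hε : 0 < ε) (hεs : 2 * ε < s) (hK : 0 ≤ K)
    (hgδ : ∀ y ∈ Ω, ‖g y‖ ≤ K * δ y ^ (s - 1))
    (hH : ∀ y ∈ Ω, ‖g x - g y‖ ≤ K * ‖x - y‖ ^ s / min (δ x) (δ y)) :
    ∫⁻ y in Ω, (if δ x ≤ δ y then ENNReal.ofReal (‖g x - g y‖ ^ 2 *
        min (δ x) (δ y) ^ (1 - 2 * ε) * ‖x - y‖ ^ (-((dim E : ℝ) + 2 * s - 4 * ε))) else 0) ∂μ ≤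
      ENNReal.ofReal (2 * (dim E * μ.real (ball 0 1)) * K ^ 2 * (1 / ε + 1 / (s - 2 * ε)) *
        δ x ^ (2 * ε - 1)) := by
  set k := nearFarKernel x (δ x) (K ^ 2 * δ x ^ (-1 - 2 * ε)) (4 * ε)
    (4 * K ^ 2 * δ x ^ (2 * s - 1 - 2 * ε)) (2 * (s - 2 * ε))
  calc _ ≤ ∫⁻ y in Ω, k y ∂μ := by
        refine setLIntegral_mono' hΩ fun y hy ↦ ?_
        split_ifs with hxy
        · exact ofReal_le_nearFarKernel hx hxy hs hεs hK (hgδ x hxΩ) (hgδ y hy) (hH y hy)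
        · exact zero_le
    _ ≤ ∫⁻ y, k y ∂μ := setLIntegral_le_lintegral _ _
    _ = _ := lintegral_nearFarKernel μ x hx (by positivity) (by positivity) (by positivity)
          (by linarith)
    _ ≤ _ := ENNReal.ofReal_le_ofReal (nearFarMass_le (by positivity) hx hε)

theorem lintegral_lintegral_weightedDiff_le [MeasurableSpace F] [BorelSpace F]
    [SecondCountableTopology F] {Ω : Set E} (hΩ : MeasurableSet Ω) (hg : Measurable g)
    (hδm : Measurable δ) (hδ : ∀ x ∈ Ω, 0 < δ x) (hs : s ≤ 1) (hε : 0 < ε) (hεs : 2 * ε < s)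
    (hK : 0 ≤ K) (hgδ : ∀ x ∈ Ω, ‖g x‖ ≤ K * δ x ^ (s - 1))
    (hH : ∀ x ∈ Ω, ∀ y ∈ Ω, ‖g x - g y‖ ≤ K * ‖x - y‖ ^ s / min (δ x) (δ y))
    (hA : IntegrableOn (fun x ↦ δ x ^ (2 * ε - 1)) Ω μ) :
    ∫⁻ x in Ω, ∫⁻ y in Ω, ENNReal.ofReal (‖g x - g y‖ ^ 2 * min (δ x) (δ y) ^ (1 - 2 * ε) *
        ‖x - y‖ ^ (-((dim E : ℝ) + 2 * s - 4 * ε))) ∂μ ∂μ ≤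
      ENNReal.ofReal (4 * dim E * μ.real (ball 0 1) * K ^ 2 *
        (∫ x in Ω, δ x ^ (2 * ε - 1) ∂μ) * (1 / ε + 1 / (s - 2 * ε))) := by
  set M := 2 * (dim E * μ.real (ball 0 1)) * K ^ 2 * (1 / ε + 1 / (s - 2 * ε))
  have hmeas : Measurable (uncurry fun x y ↦ ENNReal.ofReal (‖g x - g y‖ ^ 2 *
      min (δ x) (δ y) ^ (1 - 2 * ε) * ‖x - y‖ ^ (-((dim E : ℝ) + 2 * s - 4 * ε)))) := by
    fun_prop
  calc _ ≤ 2 * ∫⁻ x in Ω, ENNReal.ofReal (M * δ x ^ (2 * ε - 1)) ∂μ := by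
        refine (lintegral_lintegral_le_two_mul_of_symm hmeas (fun x y ↦ by
          rw [norm_sub_rev (g x), min_comm, norm_sub_rev x]) hδm).trans ?_
        gcongr 2 * ?_
        exact setLIntegral_mono' hΩ fun x hx ↦ setLIntegral_weightedDiff_le hΩ hx (hδ x hx) hs hε
          hεs hK hgδ (hH x hx)
    _ = _ := by
        rw [← ofReal_integral_eq_lintegral_ofReal (hA.const_mul M)
            (ae_restrict_of_forall_mem hΩ fun x hx ↦ by have := hδ x hx; positivity),
          integral_const_mul, ← ENNReal.ofReal_ofNat, ← ENNReal.ofReal_mul zero_le_two]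
        congr 1
        ring

end WeightedEstimate

end MeasureTheory

/-- **Interior weighted Gagliardo seminorm estimate (proof of Theorem 2.4).**
For `n ≥ 1` there is `C = C(n) > 0` such that for every nonempty bounded open `Ω ⊂ ℝⁿ`,
`s ∈ (0,1)`, `ε ∈ (0, s/2)`, `K ≥ 0` and measurable `g : Ω → ℝⁿ` with
`‖g(x)‖ ≤ K δ(x)^{s−1}` and `‖g(x) − g(y)‖ ≤ K ‖x−y‖^s / δ(x,y)` on `Ω`, and
`A = ∫_Ω δ(x)^{2ε−1} dx < ∞`, one has
`∬_{Ω×Ω} ‖g(x)−g(y)‖² δ(x,y)^{1−2ε} ‖x−y‖^{−(n+2s−4ε)} dx dy ≤ C K² A (1/ε + 1/(s−2ε))`,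
where `δ(z) = dist(z, ∂Ω)` and `δ(x,y) = min(δ(x), δ(y))`. -/
theorem stmt3 (n : ℕ) (hn : 1 ≤ n) :
    ∃ C : ℝ, 0 < C ∧
      ∀ (Ω : Set (EuclideanSpace ℝ (Fin n))), IsOpen Ω → Bornology.IsBounded Ω → Ω.Nonempty →
      ∀ (s ε K : ℝ), s ∈ Set.Ioo (0:ℝ) 1 → ε ∈ Set.Ioo 0 (s / 2) → 0 ≤ K →
      ∀ (g : EuclideanSpace ℝ (Fin n) → EuclideanSpace ℝ (Fin n)), Measurable g →
      (∀ x ∈ Ω, ‖g x‖ ≤ K * Metric.infDist x (frontier Ω) ^ (s - 1)) →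
      (∀ x ∈ Ω, ∀ y ∈ Ω, ‖g x - g y‖ ≤
        K * ‖x - y‖ ^ s / min (Metric.infDist x (frontier Ω)) (Metric.infDist y (frontier Ω))) →
      MeasureTheory.IntegrableOn
        (fun x => Metric.infDist x (frontier Ω) ^ (2 * ε - 1)) Ω volume →
      (∫⁻ x in Ω, ∫⁻ y in Ω, ENNReal.ofReal (‖g x - g y‖ ^ 2 *
          (min (Metric.infDist x (frontier Ω)) (Metric.infDist y (frontier Ω))) ^ (1 - 2 * ε) *
          ‖x - y‖ ^ (-((n : ℝ) + 2 * s - 4 * ε)))) ≤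
      ENNReal.ofReal (C * K ^ 2 *
        (∫ x in Ω, Metric.infDist x (frontier Ω) ^ (2 * ε - 1)) * (1 / ε + 1 / (s - 2 * ε))) := by
  have : Nonempty (Fin n) := ⟨⟨0, hn⟩⟩
  have hball : 0 < volume.real (ball (0 : EuclideanSpace ℝ (Fin n)) 1) :=
    ENNReal.toReal_pos (measure_ball_pos volume 0 one_pos).ne' measure_ball_lt_top.ne
  refine ⟨4 * n * volume.real (ball (0 : EuclideanSpace ℝ (Fin n)) 1), by positivity, ?_⟩
  intro Ω hΩ hΩb hΩne s ε K hs hε hK g hg hgδ hH hA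
  have hfr := hΩb.nonempty_frontier hΩne
  have key := lintegral_lintegral_weightedDiff_le hΩ.measurableSet hg
    (continuous_infDist_pt _).measurable (fun x hx ↦ hΩ.infDist_frontier_pos hfr hx) hs.2.le hε.1
    (by linarith [hε.2]) hK hgδ hH hA
  rwa [finrank_euclideanSpace_fin] at key
end

section
/- Let n ≥ 1 and let Ω ⊂ ℝⁿ be a nonempty bounded convex open set. Then there exists a constant C > 0 such that for every β ∈ (0,1]: ∫_Ω δ(x)^{β−1} dx ≤ C/β, where δ(x) denotes the Euclidean distance from x to the complement Ωᶜ. -/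
/-!
If `ball c r ⊆ Ω`, convexity puts the ball of radius `(1 - θ) r` around every point of the
homothetic copy `c + θ • (Ω - c)` inside `Ω`. For `θ = 1 - s / r` this copy therefore misses the
boundary layer `{δ < s}`; it has volume `θⁿ |Ω|`, so Bernoulli's inequality gives
`|{δ < s}| ≤ n (s / r) |Ω|`. On the dyadic shell `{r 2⁻ᵏ⁻¹ < δ ≤ r 2⁻ᵏ}` the integrand is at most
`(r 2⁻ᵏ⁻¹)^(β - 1)`, so the shell contributes `O(2^(-β k))`, and the geometric series sums to
`O(1 / (1 - 2^(-β))) = O(1 / β)`.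
-/

open MeasureTheory Metric Set Pointwise Module

theorem le_infDist_compl_of_ball_subset {X : Type*} [PseudoMetricSpace X] {Ω : Set X} {x : X}
    {s : ℝ} (hΩ : Ωᶜ.Nonempty) (h : ball x s ⊆ Ω) : s ≤ infDist x Ωᶜ :=
  (le_infDist hΩ).2 fun _ hy => not_lt.1 fun hlt => hy (h (mem_ball'.2 hlt))

theorem exists_mul_half_pow_succ_lt_le {x r : ℝ} (hx : 0 < x) (hxr : x ≤ r) :
    ∃ k : ℕ, r * (1 / 2) ^ (k + 1) < x ∧ x ≤ 2 * (r * (1 / 2) ^ (k + 1)) := by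
  have hr := hx.trans_le hxr
  obtain ⟨k, hk₁, hk₂⟩ := exists_nat_pow_near_of_lt_one (div_pos hx hr) ((div_le_one hr).2 hxr)
    (by norm_num : (0 : ℝ) < 1 / 2) (by norm_num)
  exact ⟨k, (mul_comm r _).trans_lt ((lt_div_iff₀ hr).1 hk₁),
    ((div_le_iff₀ hr).1 hk₂).trans_eq (by ring)⟩

theorem hasSum_mul_half_pow_succ_rpow {r β : ℝ} (hr : 0 ≤ r) (hβ : 0 < β) :
    HasSum (fun k : ℕ => (r * (1 / 2) ^ (k + 1)) ^ β)
      (r ^ β * ((1 / 2) ^ β * (1 - (1 / 2 : ℝ) ^ β)⁻¹)) := by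
  have hq : (1 / 2 : ℝ) ^ β < 1 := Real.rpow_lt_one (by norm_num) (by norm_num) hβ
  have hterm : ∀ k : ℕ,
      (r * (1 / 2) ^ (k + 1)) ^ β = r ^ β * ((1 / 2) ^ β * ((1 / 2 : ℝ) ^ β) ^ k) := by
    intro k
    rw [Real.mul_rpow hr (by positivity), ← Real.rpow_pow_comm (by norm_num), pow_succ']
  simp only [hterm]
  exact ((hasSum_geometric_of_lt_one (by positivity) hq).mul_left _).mul_left _

theorem inv_one_sub_half_rpow_le {β : ℝ} (hβ₀ : 0 < β) (hβ₁ : β ≤ 1) :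
    (1 - (1 / 2 : ℝ) ^ β)⁻¹ ≤ 2 / β := by
  have hbernoulli := rpow_one_add_le_one_add_mul_self (by norm_num : (-1 : ℝ) ≤ -(1 / 2))
    hβ₀.le hβ₁
  rw [show (1 : ℝ) + -(1 / 2) = 1 / 2 by norm_num] at hbernoulli
  calc (1 - (1 / 2 : ℝ) ^ β)⁻¹ ≤ (β / 2)⁻¹ := inv_anti₀ (by positivity) (by linarith)
    _ = 2 / β := inv_div _ _

theorem tsum_mul_half_pow_succ_rpow_le {r β : ℝ} (hr : 0 ≤ r) (hβ₀ : 0 < β) (hβ₁ : β ≤ 1) :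
    ∑' k : ℕ, (r * (1 / 2) ^ (k + 1)) ^ β ≤ 2 * r ^ β / β := by
  have hq : (1 / 2 : ℝ) ^ β ≤ 1 := Real.rpow_le_one (by norm_num) (by norm_num) hβ₀.le
  rw [(hasSum_mul_half_pow_succ_rpow hr hβ₀).tsum_eq]
  calc r ^ β * ((1 / 2) ^ β * (1 - (1 / 2 : ℝ) ^ β)⁻¹) ≤ r ^ β * (1 * (2 / β)) := by
        gcongr
        exact inv_one_sub_half_rpow_le hβ₀ hβ₁
    _ = 2 * r ^ β / β := by ring

section DyadicShells

variable {X : Type*} [MeasurableSpace X] {μ : Measure X} {δ : X → ℝ} {β : ℝ}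

theorem setLIntegral_rpow_sub_one_le_of_le {A : Set X} {t : ℝ} (ht : 0 < t) (hβ : β ≤ 1)
    (hA : ∀ x ∈ A, t ≤ δ x) :
    ∫⁻ x in A, ENNReal.ofReal (δ x ^ (β - 1)) ∂μ ≤ ENNReal.ofReal (t ^ (β - 1)) * μ A :=
  (setLIntegral_mono measurable_const fun x hx => ENNReal.ofReal_le_ofReal
    (Real.rpow_le_rpow_of_nonpos ht (hA x hx) (by linarith))).trans_eq (setLIntegral_const _ _)

theorem setLIntegral_rpow_sub_one_le_of_measure_le {A : Set X} {t M : ℝ} (ht : 0 < t)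
    (hβ : β ≤ 1) (hA : ∀ x ∈ A, t ≤ δ x) (hμA : μ A ≤ ENNReal.ofReal (M * t)) :
    ∫⁻ x in A, ENNReal.ofReal (δ x ^ (β - 1)) ∂μ ≤ ENNReal.ofReal (M * t ^ β) :=
  calc ∫⁻ x in A, ENNReal.ofReal (δ x ^ (β - 1)) ∂μ
      ≤ ENNReal.ofReal (t ^ (β - 1)) * μ A := setLIntegral_rpow_sub_one_le_of_le ht hβ hA
    _ ≤ ENNReal.ofReal (t ^ (β - 1)) * ENNReal.ofReal (M * t) := by gcongr
    _ = ENNReal.ofReal (M * t ^ β) := by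
        rw [← ENNReal.ofReal_mul (by positivity), Real.rpow_sub_one ht.ne']
        congr 1
        field_simp

theorem setLIntegral_rpow_sub_one_le {S : Set X} {K r : ℝ} (hδ : ∀ x ∈ S, 0 < δ x)
    (hK : 0 ≤ K) (hr : 0 < r) (hβ₀ : 0 < β) (hβ₁ : β ≤ 1)
    (hlayer : ∀ s, 0 < s → μ {x ∈ S | δ x < s} ≤ ENNReal.ofReal (K * s)) :
    ∫⁻ x in S, ENNReal.ofReal (δ x ^ (β - 1)) ∂μ ≤
      ENNReal.ofReal (r ^ (β - 1)) * μ S + ENNReal.ofReal (8 * K * r ^ β / β) := by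
  set t : ℕ → ℝ := fun k => r * (1 / 2) ^ (k + 1)
  have ht : ∀ k, 0 < t k := fun k => by positivity
  set shell : ℕ → Set X := fun k => {x ∈ S | t k < δ x ∧ δ x ≤ 2 * t k}
  have hcover : S ⊆ {x ∈ S | r < δ x} ∪ ⋃ k, shell k := by
    intro x hx
    rcases lt_or_ge r (δ x) with hrx | hxr
    · exact Or.inl ⟨hx, hrx⟩
    obtain ⟨k, hk⟩ := exists_mul_half_pow_succ_lt_le (hδ x hx) hxr
    exact Or.inr (mem_iUnion.2 ⟨k, hx, hk⟩)
  have htop : ∫⁻ x in {x ∈ S | r < δ x}, ENNReal.ofReal (δ x ^ (β - 1)) ∂μ ≤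
      ENNReal.ofReal (r ^ (β - 1)) * μ S :=
    (setLIntegral_rpow_sub_one_le_of_le hr hβ₁ fun x hx => hx.2.le).trans
      (by gcongr; exact sep_subset _ _)
  have hshell : ∀ k, ∫⁻ x in shell k, ENNReal.ofReal (δ x ^ (β - 1)) ∂μ ≤
      ENNReal.ofReal (4 * K * t k ^ β) := fun k =>
    setLIntegral_rpow_sub_one_le_of_measure_le (ht k) hβ₁ (fun x hx => hx.2.1.le) <|
      (measure_mono (t := {x ∈ S | δ x < 4 * t k}) fun x hx =>
        ⟨hx.1, by linarith [hx.2.2, ht k]⟩).trans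
        ((hlayer _ (by linarith [ht k])).trans_eq (by ring_nf))
  have hsum : Summable fun k => 4 * K * t k ^ β :=
    (hasSum_mul_half_pow_succ_rpow hr.le hβ₀).summable.mul_left _
  calc ∫⁻ x in S, ENNReal.ofReal (δ x ^ (β - 1)) ∂μ
      ≤ ∫⁻ x in {x ∈ S | r < δ x} ∪ ⋃ k, shell k, ENNReal.ofReal (δ x ^ (β - 1)) ∂μ :=
        lintegral_mono_set hcover
    _ ≤ ENNReal.ofReal (r ^ (β - 1)) * μ S + ∑' k, ENNReal.ofReal (4 * K * t k ^ β) :=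
        (lintegral_union_le _ _ _).trans
          (add_le_add htop ((lintegral_iUnion_le _ _).trans (ENNReal.tsum_le_tsum hshell)))
    _ = ENNReal.ofReal (r ^ (β - 1)) * μ S + ENNReal.ofReal (4 * K * ∑' k, t k ^ β) := by
        rw [← ENNReal.ofReal_tsum_of_nonneg (fun k => by positivity) hsum, tsum_mul_left]
    _ ≤ ENNReal.ofReal (r ^ (β - 1)) * μ S + ENNReal.ofReal (8 * K * r ^ β / β) := by
        gcongr ENNReal.ofReal (r ^ (β - 1)) * μ S + ENNReal.ofReal ?_
        calc 4 * K * ∑' k, t k ^ β ≤ 4 * K * (2 * r ^ β / β) := by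
              gcongr
              exact tsum_mul_half_pow_succ_rpow_le hr.le hβ₀ hβ₁
          _ = 8 * K * r ^ β / β := by ring

end DyadicShells

section NormedSpace

variable {E : Type*} [NormedAddCommGroup E] [NormedSpace ℝ E]

theorem Bornology.IsBounded.nonempty_compl [Nontrivial E] {s : Set E}
    (hs : Bornology.IsBounded s) : sᶜ.Nonempty :=
  Set.nonempty_compl.2 fun h => NormedSpace.unbounded_univ ℝ E (h ▸ hs)

theorem Convex.ball_homothety_subset {Ω : Set E} (hΩ : Convex ℝ Ω) {c z : E} {r θ : ℝ}
    (hc : ball c r ⊆ Ω) (hz : z ∈ Ω) (hθ₀ : 0 ≤ θ) (hθ₁ : θ < 1) :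
    ball (AffineMap.homothety c θ z) ((1 - θ) * r) ⊆ Ω := by
  have hball :
      ball (AffineMap.homothety c θ z) ((1 - θ) * r) = θ • {z} + (1 - θ) • ball c r := by
    rw [_root_.smul_ball (by linarith : 1 - θ ≠ 0), smul_set_singleton, singleton_add_ball,
      Real.norm_of_nonneg (by linarith), AffineMap.homothety_apply, vsub_eq_sub, vadd_eq_add]
    congr 1
    module
  rw [hball]
  exact (add_subset_add (smul_set_mono (singleton_subset_iff.2 hz)) (smul_set_mono hc)).trans
    (hΩ.set_combo_subset hθ₀ (by linarith) (by ring))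

variable [FiniteDimensional ℝ E] [MeasurableSpace E] [BorelSpace E] (μ : Measure E)
  [μ.IsAddHaarMeasure] {Ω : Set E} {c : E} {r s : ℝ}

theorem Convex.measure_infDist_compl_lt_le_of_le (hΩ : Convex ℝ Ω) (hΩm : MeasurableSet Ω)
    (hΩμ : μ Ω ≠ ⊤) (hΩc : Ωᶜ.Nonempty) (hc : ball c r ⊆ Ω) (hs : 0 < s) (hsr : s ≤ r) :
    μ {x ∈ Ω | infDist x Ωᶜ < s} ≤ ENNReal.ofReal (finrank ℝ E * (s / r)) * μ Ω := by
  set θ := 1 - s / r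
  have hr : 0 < r := hs.trans_le hsr
  have hθ₀ : 0 ≤ θ := by have := (div_le_one hr).2 hsr; linarith
  have hθ₁ : θ < 1 := by have := div_pos hs hr; linarith
  set T := {x ∈ Ω | s ≤ infDist x Ωᶜ}
  have hT : MeasurableSet T :=
    hΩm.inter (measurableSet_le measurable_const (continuous_infDist_pt _).measurable)
  have himage : AffineMap.homothety c θ '' Ω ⊆ T := by
    rintro _ ⟨z, hz, rfl⟩
    have hsub := hΩ.ball_homothety_subset hc hz hθ₀ hθ₁
    rw [show (1 - θ) * r = s by rw [sub_sub_cancel, div_mul_cancel₀ _ hr.ne']] at hsub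
    exact ⟨hsub (mem_ball_self hs), le_infDist_compl_of_ball_subset hΩc hsub⟩
  have hbernoulli : 1 ≤ (finrank ℝ E : ℝ) * (s / r) + θ ^ finrank ℝ E := by
    have := one_add_mul_le_pow (by linarith : (-2 : ℝ) ≤ -(s / r)) (finrank ℝ E)
    rw [← sub_eq_add_neg] at this
    linarith
  calc μ {x ∈ Ω | infDist x Ωᶜ < s} = μ (Ω \ T) := by
        congr 1; ext x; simp [T]
    _ = μ Ω - μ T := measure_sdiff (sep_subset _ _) hT.nullMeasurableSet
        (ne_top_of_le_ne_top hΩμ (measure_mono (sep_subset _ _)))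
    _ ≤ μ Ω - ENNReal.ofReal (θ ^ finrank ℝ E) * μ Ω := by
        gcongr
        calc _ = μ (AffineMap.homothety c θ '' Ω) := by
              rw [Measure.addHaar_image_homothety, abs_of_nonneg (by positivity)]
          _ ≤ μ T := measure_mono himage
    _ ≤ ENNReal.ofReal (finrank ℝ E * (s / r)) * μ Ω := by
        rw [tsub_le_iff_right, ← add_mul, ← ENNReal.ofReal_add (by positivity) (by positivity)]
        exact le_mul_of_one_le_left zero_le (ENNReal.one_le_ofReal.2 hbernoulli)

theorem Convex.measure_infDist_compl_lt_le [Nontrivial E] (hΩ : Convex ℝ Ω)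
    (hΩm : MeasurableSet Ω) (hΩb : Bornology.IsBounded Ω) (hc : ball c r ⊆ Ω) (hr : 0 < r)
    (hs : 0 < s) :
    μ {x ∈ Ω | infDist x Ωᶜ < s} ≤ ENNReal.ofReal (finrank ℝ E * (s / r)) * μ Ω := by
  rcases le_or_gt s r with hsr | hrs
  · exact hΩ.measure_infDist_compl_lt_le_of_le μ hΩm hΩb.measure_lt_top.ne hΩb.nonempty_compl
      hc hs hsr
  · have hfinrank : (1 : ℝ) ≤ finrank ℝ E := by exact_mod_cast finrank_pos
    calc μ {x ∈ Ω | infDist x Ωᶜ < s} ≤ μ Ω := measure_mono (sep_subset _ _)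
      _ ≤ ENNReal.ofReal (finrank ℝ E * (s / r)) * μ Ω :=
        le_mul_of_one_le_left zero_le (ENNReal.one_le_ofReal.2
          (one_le_mul_of_one_le_of_one_le hfinrank ((one_le_div hr).2 hrs.le)))

theorem Convex.setLIntegral_infDist_compl_rpow_sub_one_le [Nontrivial E] (hΩ : Convex ℝ Ω)
    (hΩo : IsOpen Ω) (hΩb : Bornology.IsBounded Ω) (hc : ball c r ⊆ Ω) (hr : 0 < r)
    (hr₁ : r ≤ 1) {β : ℝ} (hβ₀ : 0 < β) (hβ₁ : β ≤ 1) :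
    ∫⁻ x in Ω, ENNReal.ofReal (infDist x Ωᶜ ^ (β - 1)) ∂μ ≤
      ENNReal.ofReal ((1 + 8 * finrank ℝ E) * (μ Ω).toReal / r / β) := by
  set V := (μ Ω).toReal
  have hV : μ Ω = ENNReal.ofReal V := (ENNReal.ofReal_toReal hΩb.measure_lt_top.ne).symm
  have hδ : ∀ x ∈ Ω, 0 < infDist x Ωᶜ := fun x hx =>
    (hΩo.isClosed_compl.notMem_iff_infDist_pos hΩb.nonempty_compl).1 (not_not.2 hx)
  have hlayer : ∀ s, 0 < s →
      μ {x ∈ Ω | infDist x Ωᶜ < s} ≤ ENNReal.ofReal (finrank ℝ E * V / r * s) := fun s hs => by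
    refine (hΩ.measure_infDist_compl_lt_le μ hΩo.measurableSet hΩb hc hr hs).trans_eq ?_
    rw [hV, ← ENNReal.ofReal_mul (by positivity)]
    ring_nf
  refine (setLIntegral_rpow_sub_one_le hδ (by positivity) hr hβ₀ hβ₁ hlayer).trans ?_
  rw [hV, ← ENNReal.ofReal_mul (by positivity),
    ← ENNReal.ofReal_add (by positivity) (by positivity), Real.rpow_sub_one hr.ne']
  refine ENNReal.ofReal_le_ofReal ?_
  have hrβ : r ^ β ≤ 1 := Real.rpow_le_one hr.le hr₁ hβ₀.le
  have hV' : r ^ β * V ≤ V / β :=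
    (mul_le_of_le_one_left ENNReal.toReal_nonneg hrβ).trans
      (le_div_self ENNReal.toReal_nonneg hβ₀ hβ₁)
  calc r ^ β / r * V + 8 * (finrank ℝ E * V / r) * r ^ β / β
      = (r ^ β * V + 8 * finrank ℝ E * V * r ^ β / β) / r := by ring
    _ ≤ (V / β + 8 * finrank ℝ E * V * 1 / β) / r := by gcongr
    _ = (1 + 8 * finrank ℝ E) * V / r / β := by ring

end NormedSpace

/-- **Integrability of negative powers of the distance to the boundary.**
For a nonempty bounded convex open `Ω ⊂ ℝⁿ` there is `C > 0` such that for all `β ∈ (0,1]`,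
`∫_Ω δ(x)^{β−1} dx ≤ C/β`, where `δ(x) = dist(x, Ωᶜ)`. -/
theorem stmt4 (n : ℕ) (hn : 1 ≤ n) (Ω : Set (EuclideanSpace ℝ (Fin n)))
    (hΩo : IsOpen Ω) (hΩc : Convex ℝ Ω) (hΩb : Bornology.IsBounded Ω) (hne : Ω.Nonempty) :
    ∃ C : ℝ, 0 < C ∧ ∀ β : ℝ, β ∈ Set.Ioc (0:ℝ) 1 →
      ∫⁻ x in Ω, ENNReal.ofReal (Metric.infDist x Ωᶜ ^ (β - 1)) ≤
        ENNReal.ofReal (C / β) := by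
  have : Nonempty (Fin n) := Fin.pos_iff_nonempty.mp hn
  obtain ⟨c, hc⟩ := hne
  obtain ⟨ε, hε, hεΩ⟩ := Metric.isOpen_iff.1 hΩo c hc
  have hr : 0 < min ε 1 := lt_min hε one_pos
  have hV : 0 < (volume Ω).toReal :=
    ENNReal.toReal_pos (hΩo.measure_ne_zero volume ⟨c, hc⟩) hΩb.measure_lt_top.ne
  refine ⟨(1 + 8 * n) * (volume Ω).toReal / min ε 1, by positivity, fun β ⟨hβ₀, hβ₁⟩ => ?_⟩
  simpa only [finrank_euclideanSpace_fin] using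
    hΩc.setLIntegral_infDist_compl_rpow_sub_one_le volume hΩo hΩb
      ((ball_subset_ball (min_le_left _ _)).trans hεΩ) hr (min_le_right _ _) hβ₀ hβ₁
end
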